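/- Let ψ(x) = φ(x)/Φ(x) with φ, Φ the standard Gaussian density and CDF. Then the second derivative ψ''(x) is strictly positive for all real x; in particular ψ is strictly convex. -/

import Mathlib

/-!
Differentiating `ψ = φ / Φ` with `φ' = -x φ` and `Φ' = φ` gives `ψ' = -ψ (x + ψ)` and
`ψ'' = ψ (2 ψ² + 3 x ψ + x² - 1)`, so it suffices that `ψ x` exceeds the larger root
`b x = (√(x² + 8) - 3 x) / 4` of this quadratic. For `x ≥ 1` the root is `≤ 0 < ψ x`. For `x < 1`
it is positive and the bound is Sampford's inequality `Φ < φ / b`: the gap `φ / b - Φ` tends to `0`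
at `-∞` and has derivative `φ (√(x² + 8) (x² + 2) + x (x² + 6)) / (8 √(x² + 8) b²)`, positive
because the squares of the two summands in the bracket differ by `32`.
-/

open Real Set

/-- The standard Gaussian density. -/
noncomputable def stdGaussPDF (x : ℝ) : ℝ :=
  (Real.sqrt (2 * Real.pi))⁻¹ * Real.exp (-x ^ 2 / 2)

/-- The standard Gaussian cumulative distribution function. -/
noncomputable def stdGaussCDF (x : ℝ) : ℝ :=
  ∫ u in Set.Iic x, stdGaussPDF u

/-- The inverse Mill's ratio ψ(x) = φ(x)/Φ(x). -/
noncomputable def psiMill (x : ℝ) : ℝ := stdGaussPDF x / stdGaussCDF x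

open MeasureTheory ProbabilityTheory Filter Topology

lemma pos_of_hasDerivAt_pos_of_tendsto_atBot {f f' : ℝ → ℝ} {a : ℝ}
    (hf : ∀ x < a, HasDerivAt f (f' x) x) (hf' : ∀ x < a, 0 < f' x)
    (hlim : Tendsto f atBot (𝓝 0)) {x : ℝ} (hx : x < a) : 0 < f x := by
  have hmono : StrictMonoOn f (Iio a) := by
    refine strictMonoOn_of_deriv_pos (convex_Iio a)
      (fun y hy => (hf y hy).continuousAt.continuousWithinAt) fun y hy => ?_
    rw [interior_Iio] at hy
    rw [(hf y hy).deriv]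
    exact hf' y hy
  have hprev : 0 ≤ f (x - 1) := by
    refine le_of_tendsto hlim ?_
    filter_upwards [eventually_lt_atBot (x - 1)] with z hz
    exact (hmono (mem_Iio.2 (by linarith)) (mem_Iio.2 (by linarith)) hz).le
  exact hprev.trans_lt (hmono (mem_Iio.2 (by linarith)) (mem_Iio.2 hx) (by linarith))

lemma stdGaussPDF_eq_gaussianPDFReal : stdGaussPDF = gaussianPDFReal 0 1 := by
  ext x
  simp [stdGaussPDF, gaussianPDFReal_def]

lemma stdGaussPDF_pos (x : ℝ) : 0 < stdGaussPDF x := by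
  unfold stdGaussPDF; positivity

lemma continuous_stdGaussPDF : Continuous stdGaussPDF := by
  unfold stdGaussPDF; fun_prop

lemma integrable_stdGaussPDF : Integrable stdGaussPDF := by
  rw [stdGaussPDF_eq_gaussianPDFReal]
  exact integrable_gaussianPDFReal 0 1

lemma hasDerivAt_stdGaussPDF (x : ℝ) : HasDerivAt stdGaussPDF (-x * stdGaussPDF x) x := by
  have hq : HasDerivAt (fun y : ℝ => -y ^ 2 / 2) (-x) x := by
    refine (((hasDerivAt_pow 2 x).div_const 2).neg.congr_deriv (by ring)).congr_of_eventuallyEq ?_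
    exact .of_forall fun y => by simp [neg_div]
  exact (hq.exp.const_mul _).congr_deriv (by unfold stdGaussPDF; ring)

lemma tendsto_stdGaussPDF_atBot : Tendsto stdGaussPDF atBot (𝓝 0) := by
  have hsq : Tendsto (fun x : ℝ => -x ^ 2 / 2) atBot atBot := by
    refine (tendsto_neg_atTop_atBot.comp ?_).atBot_div_const two_pos
    simpa [sq] using tendsto_id.atBot_mul_atBot₀ (tendsto_id (α := ℝ) (x := atBot))
  have h := (tendsto_exp_atBot.comp hsq).const_mul (√(2 * π))⁻¹
  rw [mul_zero] at h
  exact h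

lemma stdGaussCDF_eq_add_intervalIntegral (x : ℝ) :
    stdGaussCDF x = stdGaussCDF 0 + ∫ u in (0 : ℝ)..x, stdGaussPDF u := by
  rw [← intervalIntegral.integral_Iic_sub_Iic integrable_stdGaussPDF.integrableOn
    integrable_stdGaussPDF.integrableOn]
  simp only [stdGaussCDF]; ring

lemma hasDerivAt_stdGaussCDF (x : ℝ) : HasDerivAt stdGaussCDF (stdGaussPDF x) x := by
  have h := ((continuous_stdGaussPDF.integral_hasStrictDerivAt 0 x).hasDerivAt).const_add
    (stdGaussCDF 0)
  exact h.congr_of_eventuallyEq (.of_forall stdGaussCDF_eq_add_intervalIntegral)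

lemma stdGaussCDF_pos (x : ℝ) : 0 < stdGaussCDF x := by
  refine (setIntegral_pos_iff_support_of_nonneg_ae (.of_forall fun u => (stdGaussPDF_pos u).le)
    integrable_stdGaussPDF.integrableOn).2 ?_
  rw [Function.support_eq_univ fun u => (stdGaussPDF_pos u).ne', univ_inter, volume_Iic]
  exact ENNReal.zero_lt_top

lemma tendsto_stdGaussCDF_atBot : Tendsto stdGaussCDF atBot (𝓝 0) := by
  have h : Tendsto (fun x => stdGaussCDF 0 - ∫ u in x..0, stdGaussPDF u) atBot
      (𝓝 (stdGaussCDF 0 - stdGaussCDF 0)) :=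
    (intervalIntegral_tendsto_integral_Iic 0 integrable_stdGaussPDF.integrableOn
      tendsto_id).const_sub _
  rw [sub_self] at h
  refine h.congr fun x => ?_
  rw [stdGaussCDF_eq_add_intervalIntegral x, intervalIntegral.integral_symm]
  ring

noncomputable def sampfordBound (x : ℝ) : ℝ := (√(x ^ 2 + 8) - 3 * x) / 4

lemma sq_sqrt_sq_add_eight (x : ℝ) : √(x ^ 2 + 8) ^ 2 = x ^ 2 + 8 := sq_sqrt (by positivity)

lemma sampfordBound_pos {x : ℝ} (hx : x < 1) : 0 < sampfordBound x := by
  have hs := sq_sqrt_sq_add_eight x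
  have := sqrt_nonneg (x ^ 2 + 8)
  unfold sampfordBound
  nlinarith

lemma sampfordBound_nonpos {x : ℝ} (hx : 1 ≤ x) : sampfordBound x ≤ 0 := by
  have hs := sq_sqrt_sq_add_eight x
  have := sqrt_nonneg (x ^ 2 + 8)
  unfold sampfordBound
  nlinarith

lemma two_mul_sq_add_three_mul_add_sq_sub_one_pos {x t : ℝ} (ht : sampfordBound x < t) :
    0 < 2 * t ^ 2 + 3 * x * t + x ^ 2 - 1 := by
  have hs := sq_sqrt_sq_add_eight x
  have hfactor : 2 * t ^ 2 + 3 * x * t + x ^ 2 - 1 =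
      2 * (t - sampfordBound x) * (t - sampfordBound x + √(x ^ 2 + 8) / 2) := by
    unfold sampfordBound; linear_combination (1 / 8 : ℝ) * hs
  rw [hfactor]
  have := sqrt_nonneg (x ^ 2 + 8)
  have := sub_pos.2 ht
  positivity

lemma hasDerivAt_sampfordBound (x : ℝ) :
    HasDerivAt sampfordBound ((x / √(x ^ 2 + 8) - 3) / 4) x := by
  have hsq : HasDerivAt (fun y : ℝ => y ^ 2 + 8) (2 * x) x := by
    simpa using (hasDerivAt_pow 2 x).add_const 8
  have hsqrt := hsq.sqrt (by positivity)
  refine ((hsqrt.sub ((hasDerivAt_id x).const_mul 3)).div_const 4).congr_deriv ?_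
  field_simp

lemma sqrt_sq_add_eight_mul_add_pos (x : ℝ) :
    0 < √(x ^ 2 + 8) * (x ^ 2 + 2) + x * (x ^ 2 + 6) := by
  have hs := sq_sqrt_sq_add_eight x
  have hpos : 0 < √(x ^ 2 + 8) * (x ^ 2 + 2) := by positivity
  have hdiff : (√(x ^ 2 + 8) * (x ^ 2 + 2)) ^ 2 - (x * (x ^ 2 + 6)) ^ 2 = 32 := by
    rw [mul_pow, hs]; ring
  nlinarith [sq_nonneg (√(x ^ 2 + 8) * (x ^ 2 + 2) + x * (x ^ 2 + 6))]

noncomputable def sampfordGap (x : ℝ) : ℝ := stdGaussPDF x / sampfordBound x - stdGaussCDF x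

lemma hasDerivAt_sampfordGap {x : ℝ} (hx : x < 1) :
    HasDerivAt sampfordGap (stdGaussPDF x * (√(x ^ 2 + 8) * (x ^ 2 + 2) + x * (x ^ 2 + 6)) /
      (8 * √(x ^ 2 + 8) * sampfordBound x ^ 2)) x := by
  refine (((hasDerivAt_stdGaussPDF x).div (hasDerivAt_sampfordBound x)
    (sampfordBound_pos hx).ne').sub (hasDerivAt_stdGaussCDF x)).congr_deriv ?_
  have hs := sq_sqrt_sq_add_eight x
  have hb := (sampfordBound_pos hx).ne'
  have hs0 : √(x ^ 2 + 8) ≠ 0 := by positivity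
  field_simp
  unfold sampfordBound
  linear_combination stdGaussPDF x * (4 * x - 2 * √(x ^ 2 + 8)) * hs

lemma tendsto_sampfordBound_atBot : Tendsto sampfordBound atBot atTop := by
  have hlin : Tendsto (fun x : ℝ => -3 / 4 * x) atBot atTop :=
    tendsto_id.const_mul_atBot_of_neg (by norm_num)
  refine tendsto_atTop_mono (fun x => ?_) hlin
  have := sqrt_nonneg (x ^ 2 + 8)
  unfold sampfordBound
  linarith

lemma tendsto_sampfordGap_atBot : Tendsto sampfordGap atBot (𝓝 0) := by
  have h := (tendsto_stdGaussPDF_atBot.div_atTop tendsto_sampfordBound_atBot).sub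
    tendsto_stdGaussCDF_atBot
  rw [sub_zero] at h
  exact h

lemma psiMill_pos (x : ℝ) : 0 < psiMill x := div_pos (stdGaussPDF_pos x) (stdGaussCDF_pos x)

lemma sampfordBound_lt_psiMill (x : ℝ) : sampfordBound x < psiMill x := by
  rcases lt_or_ge x 1 with hx | hx
  · have hgap : 0 < sampfordGap x :=
      pos_of_hasDerivAt_pos_of_tendsto_atBot (fun y hy => hasDerivAt_sampfordGap hy)
        (fun y hy => div_pos (mul_pos (stdGaussPDF_pos y) (sqrt_sq_add_eight_mul_add_pos y))
          (by have := sampfordBound_pos hy; positivity))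
        tendsto_sampfordGap_atBot hx
    have hb := sampfordBound_pos hx
    have hc := stdGaussCDF_pos x
    unfold sampfordGap at hgap
    unfold psiMill
    rw [sub_pos, lt_div_iff₀ hb] at hgap
    rwa [lt_div_iff₀ hc, mul_comm]
  · exact (sampfordBound_nonpos hx).trans_lt (psiMill_pos x)

lemma hasDerivAt_psiMill (x : ℝ) : HasDerivAt psiMill (-psiMill x * (x + psiMill x)) x := by
  refine ((hasDerivAt_stdGaussPDF x).div (hasDerivAt_stdGaussCDF x)
    (stdGaussCDF_pos x).ne').congr_deriv ?_
  have hΦ := (stdGaussCDF_pos x).ne'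
  unfold psiMill
  field_simp
  ring

lemma iteratedDeriv_two_psiMill (x : ℝ) :
    iteratedDeriv 2 psiMill x =
      psiMill x * (2 * psiMill x ^ 2 + 3 * x * psiMill x + x ^ 2 - 1) := by
  have hderiv : deriv psiMill = fun y => -psiMill y * (y + psiMill y) :=
    funext fun y => (hasDerivAt_psiMill y).deriv
  have hψ := hasDerivAt_psiMill x
  rw [iteratedDeriv_succ, iteratedDeriv_one, hderiv]
  refine (hψ.neg.mul ((hasDerivAt_id x).add hψ)).deriv.trans ?_
  simp only [Pi.neg_apply, Pi.add_apply, id]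
  ring

theorem psiMill_second_deriv_pos :
    (∀ x : ℝ, 0 < iteratedDeriv 2 psiMill x) ∧ StrictConvexOn ℝ Set.univ psiMill := by
  have hpos (x : ℝ) : 0 < iteratedDeriv 2 psiMill x := by
    rw [iteratedDeriv_two_psiMill]
    exact mul_pos (psiMill_pos x)
      (two_mul_sq_add_three_mul_add_sq_sub_one_pos (sampfordBound_lt_psiMill x))
  refine ⟨hpos, strictConvexOn_univ_of_deriv2_pos ?_ fun x => ?_⟩
  · exact continuous_iff_continuousAt.2 fun x => (hasDerivAt_psiMill x).continuousAt
  · simpa only [iteratedDeriv_eq_iterate] using hpos x
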